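/- arXiv:2508.10204 — 4 statements merged into one kernel-verified Lean document; each statement's English description precedes it below -/
import Mathlib

section
/- Let (δ, v, z, s) be feasible for the mixed-integer formulation (P). Then (δ, v) is feasible for the continuous formulation (Q); that is, for every player i and action a_i ∈ A_i, v_i − u_i(a_i, δ_{-i}) ≥ 0 and δ_i(a_i)·(v_i − u_i(a_i, δ_{-i})) = 0. -/
open Finset

variable {N : Type*} [Fintype N] [DecidableEq N] [Nonempty N]
variable {A : N → Type*} [∀ i, Fintype (A i)] [∀ i, DecidableEq (A i)]
variable [∀ i, Nonempty (A i)]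

/-- `δ` is a mixed strategy profile: each `δ i` is nonnegative and sums to 1. -/
def IsMixedProfile {N : Type*} {A : N → Type*} [∀ i, Fintype (A i)]
    (δ : ∀ i, A i → ℝ) : Prop :=
  (∀ i a, 0 ≤ δ i a) ∧ ∀ i, ∑ a, δ i a = 1

/-- Expected utility of player `i` under mixed strategy profile `δ`. -/
def expUtil {N : Type*} [Fintype N] [DecidableEq N] {A : N → Type*}
    [∀ i, Fintype (A i)] (u : N → (∀ j, A j) → ℝ) (δ : ∀ i, A i → ℝ) (i : N) : ℝ :=
  ∑ a : ∀ j, A j, (∏ j, δ j (a j)) * u i a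

/-- The point-mass (pure) strategy on action `ai`. -/
def pureStrat {N : Type*} {A : N → Type*} [∀ i, DecidableEq (A i)]
    (i : N) (ai : A i) : A i → ℝ := fun b => if b = ai then 1 else 0

/-- `u_i(a_i, δ_{-i})`: expected utility of player `i` when playing the pure
action `ai` against the opponents' profile `δ_{-i}`. -/
def devUtil {N : Type*} [Fintype N] [DecidableEq N] {A : N → Type*}
    [∀ i, Fintype (A i)] [∀ i, DecidableEq (A i)]
    (u : N → (∀ j, A j) → ℝ) (δ : ∀ i, A i → ℝ) (i : N) (ai : A i) : ℝ :=
  expUtil u (Function.update δ i (pureStrat i ai)) i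

/-- Minimum of `u i` over pure action profiles. -/
noncomputable def minU {N : Type*} [Fintype N] [DecidableEq N] {A : N → Type*}
    [∀ i, Fintype (A i)] [∀ i, Nonempty (A i)]
    (u : N → (∀ j, A j) → ℝ) (i : N) : ℝ :=
  Finset.univ.inf' Finset.univ_nonempty (u i)

/-- Maximum of `u i` over pure action profiles. -/
noncomputable def maxU {N : Type*} [Fintype N] [DecidableEq N] {A : N → Type*}
    [∀ i, Fintype (A i)] [∀ i, Nonempty (A i)]
    (u : N → (∀ j, A j) → ℝ) (i : N) : ℝ :=
  Finset.univ.sup' Finset.univ_nonempty (u i)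

/-- `δ` is a Nash equilibrium. -/
def IsNashEq {N : Type*} [Fintype N] [DecidableEq N] {A : N → Type*}
    [∀ i, Fintype (A i)] (u : N → (∀ j, A j) → ℝ) (δ : ∀ i, A i → ℝ) : Prop :=
  IsMixedProfile δ ∧ ∀ (i : N) (δ' : A i → ℝ), (∀ a, 0 ≤ δ' a) → (∑ a, δ' a = 1) →
    expUtil u (Function.update δ i δ') i ≤ expUtil u δ i

/-- `δ` is an ε-Nash equilibrium. -/
def IsEpsNashEq {N : Type*} [Fintype N] [DecidableEq N] {A : N → Type*}
    [∀ i, Fintype (A i)] (u : N → (∀ j, A j) → ℝ) (δ : ∀ i, A i → ℝ) (ε : ℝ) : Prop :=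
  IsMixedProfile δ ∧ ∀ (i : N) (δ' : A i → ℝ), (∀ a, 0 ≤ δ' a) → (∑ a, δ' a = 1) →
    expUtil u (Function.update δ i δ') i ≤ expUtil u δ i + ε

/-- Feasibility for the mixed-integer formulation (P). -/
def FeasP {N : Type*} [Fintype N] [DecidableEq N] {A : N → Type*}
    [∀ i, Fintype (A i)] [∀ i, DecidableEq (A i)] [∀ i, Nonempty (A i)]
    (u : N → (∀ j, A j) → ℝ) (δ : ∀ i, A i → ℝ) (v : N → ℝ)
    (z s : ∀ i, A i → ℝ) : Prop :=
  IsMixedProfile δ ∧ ∀ (i : N) (ai : A i),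
    v i = s i ai + devUtil u δ i ai ∧
    δ i ai ≤ z i ai ∧
    s i ai ≤ (1 - z i ai) * (maxU u i - minU u i) ∧
    0 ≤ s i ai ∧ s i ai ≤ maxU u i - minU u i ∧
    minU u i ≤ v i ∧ v i ≤ maxU u i ∧
    (z i ai = 0 ∨ z i ai = 1)

/-- Feasibility for the continuous formulation (Q). -/
def FeasQ {N : Type*} [Fintype N] [DecidableEq N] {A : N → Type*}
    [∀ i, Fintype (A i)] [∀ i, DecidableEq (A i)] [∀ i, Nonempty (A i)]
    (u : N → (∀ j, A j) → ℝ) (δ : ∀ i, A i → ℝ) (v : N → ℝ) : Prop :=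
  IsMixedProfile δ ∧ ∀ (i : N) (ai : A i),
    0 ≤ v i - devUtil u δ i ai ∧
    δ i ai * (v i - devUtil u δ i ai) = 0 ∧
    minU u i ≤ v i ∧ v i ≤ maxU u i

/-- Feasibility for the penalized formulation (R). -/
def FeasR {N : Type*} [Fintype N] [DecidableEq N] {A : N → Type*}
    [∀ i, Fintype (A i)] [∀ i, DecidableEq (A i)] [∀ i, Nonempty (A i)]
    (u : N → (∀ j, A j) → ℝ) (δ : ∀ i, A i → ℝ) (v : N → ℝ) (ϖ : ℝ) : Prop :=
  IsMixedProfile δ ∧ ∀ (i : N) (ai : A i),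
    δ i ai * (v i - devUtil u δ i ai) ≤ ϖ ∧
    -(δ i ai * (v i - devUtil u δ i ai)) ≤ ϖ ∧
    0 ≤ v i - devUtil u δ i ai ∧
    minU u i ≤ v i ∧ v i ≤ maxU u i

theorem mul_eq_zero_of_le_binary_bigM {δ z s M : ℝ} (hδ : 0 ≤ δ) (hδz : δ ≤ z) (hs : 0 ≤ s)
    (hsz : s ≤ (1 - z) * M) (hz : z = 0 ∨ z = 1) : δ * s = 0 := by
  rcases hz with rfl | rfl
  · rw [le_antisymm hδz hδ, zero_mul]
  · rw [le_antisymm (by simpa using hsz) hs, mul_zero]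

theorem FeasP.sub_devUtil_eq {N : Type*} [Fintype N] [DecidableEq N] {A : N → Type*}
    [∀ i, Fintype (A i)] [∀ i, DecidableEq (A i)] [∀ i, Nonempty (A i)]
    {u : N → (∀ j, A j) → ℝ} {δ : ∀ i, A i → ℝ} {v : N → ℝ} {z s : ∀ i, A i → ℝ}
    (hP : FeasP u δ v z s) (i : N) (ai : A i) : v i - devUtil u δ i ai = s i ai := by
  rw [(hP.2 i ai).1, add_sub_cancel_right]

theorem FeasP.complementarity {N : Type*} [Fintype N] [DecidableEq N] {A : N → Type*}
    [∀ i, Fintype (A i)] [∀ i, DecidableEq (A i)] [∀ i, Nonempty (A i)]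
    {u : N → (∀ j, A j) → ℝ} {δ : ∀ i, A i → ℝ} {v : N → ℝ} {z s : ∀ i, A i → ℝ}
    (hP : FeasP u δ v z s) (i : N) (ai : A i) :
    0 ≤ v i - devUtil u δ i ai ∧ δ i ai * (v i - devUtil u δ i ai) = 0 := by
  obtain ⟨-, hδz, hsz, hs, -, -, -, hz⟩ := hP.2 i ai
  rw [hP.sub_devUtil_eq]
  exact ⟨hs, mul_eq_zero_of_le_binary_bigM (hP.1.1 i ai) hδz hs hsz hz⟩

theorem FeasP.feasQ {N : Type*} [Fintype N] [DecidableEq N] {A : N → Type*}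
    [∀ i, Fintype (A i)] [∀ i, DecidableEq (A i)] [∀ i, Nonempty (A i)]
    {u : N → (∀ j, A j) → ℝ} {δ : ∀ i, A i → ℝ} {v : N → ℝ} {z s : ∀ i, A i → ℝ}
    (hP : FeasP u δ v z s) : FeasQ u δ v := by
  refine ⟨hP.1, fun i ai => ⟨(hP.complementarity i ai).1, (hP.complementarity i ai).2, ?_⟩⟩
  obtain ⟨-, -, -, -, -, hmin, hmax, -⟩ := hP.2 i ai
  exact ⟨hmin, hmax⟩

/-- Any feasible point of (P) projects to a feasible point of (Q). -/
theorem feasP_to_feasQ (u : N → (∀ j, A j) → ℝ) (δ : ∀ i, A i → ℝ) (v : N → ℝ)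
    (z s : ∀ i, A i → ℝ) (hP : FeasP u δ v z s) :
    FeasQ u δ v ∧ ∀ (i : N) (ai : A i),
      0 ≤ v i - devUtil u δ i ai ∧ δ i ai * (v i - devUtil u δ i ai) = 0 :=
  ⟨hP.feasQ, hP.complementarity⟩
end

section
/- Let (δ, v) be feasible for the continuous formulation (Q). Then there exist z and s such that (δ, v, z, s) is feasible for the mixed-integer formulation (P); in fact one may take s_i(a_i) := v_i − u_i(a_i, δ_{-i}) and z_i(a_i) := 1 if δ_i(a_i) > 0 and z_i(a_i) := 0 otherwise. -/
open Finset

variable {N : Type*} [Fintype N] [DecidableEq N] [Nonempty N]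
variable {A : N → Type*} [∀ i, Fintype (A i)] [∀ i, DecidableEq (A i)]
variable [∀ i, Nonempty (A i)]

/-! The slack `s i ai = v i - u_i(ai, δ_{-i})` vanishes on the support of `δ i` by
complementarity, which is what `z i ai = 1` requires. Off the support it is at most
`maxu_i - minu_i`, because `u_i(ai, δ_{-i})` is an average of pure-profile utilities and hence
at least `minu_i`. -/

section

variable {ι : Type*} {α : ι → Type*} [∀ i, Fintype (α i)]

theorem IsMixedProfile.le_one {δ : ∀ i, α i → ℝ} (hδ : IsMixedProfile δ) (i : ι) (a : α i) :
    δ i a ≤ 1 :=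
  hδ.2 i ▸ Finset.single_le_sum (fun b _ => hδ.1 i b) (Finset.mem_univ a)

theorem IsMixedProfile.update_pureStrat [DecidableEq ι] [∀ i, DecidableEq (α i)]
    {δ : ∀ i, α i → ℝ} (hδ : IsMixedProfile δ) (i : ι) (ai : α i) :
    IsMixedProfile (Function.update δ i (pureStrat i ai)) := by
  constructor
  · intro j a
    rcases eq_or_ne j i with rfl | hj
    · simp only [Function.update_self, pureStrat]
      split_ifs <;> norm_num
    · simpa [Function.update_of_ne hj] using hδ.1 j a
  · intro j
    rcases eq_or_ne j i with rfl | hj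
    · simp [pureStrat]
    · simpa [Function.update_of_ne hj] using hδ.2 j

variable [Fintype ι] [DecidableEq ι]

theorem IsMixedProfile.sum_prod_eq_one {δ : ∀ i, α i → ℝ} (hδ : IsMixedProfile δ) :
    ∑ a : ∀ j, α j, ∏ j, δ j (a j) = 1 := by
  rw [← Fintype.prod_sum]
  simp [hδ.2]

theorem minU_le_expUtil [∀ i, Nonempty (α i)] (u : ι → (∀ j, α j) → ℝ)
    {δ : ∀ i, α i → ℝ} (hδ : IsMixedProfile δ) (i : ι) :
    minU u i ≤ expUtil u δ i :=
  calc minU u i = ∑ a : ∀ j, α j, (∏ j, δ j (a j)) * minU u i := by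
        rw [← Finset.sum_mul, hδ.sum_prod_eq_one, one_mul]
    _ ≤ expUtil u δ i :=
        Finset.sum_le_sum fun a _ => mul_le_mul_of_nonneg_left
          (Finset.inf'_le _ (Finset.mem_univ a))
          (Finset.prod_nonneg fun j _ => hδ.1 j (a j))

theorem minU_le_devUtil [∀ i, DecidableEq (α i)] [∀ i, Nonempty (α i)]
    (u : ι → (∀ j, α j) → ℝ) {δ : ∀ i, α i → ℝ} (hδ : IsMixedProfile δ) (i : ι) (ai : α i) :
    minU u i ≤ devUtil u δ i ai :=
  minU_le_expUtil u (hδ.update_pureStrat i ai) i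

theorem FeasQ.feasP [∀ i, DecidableEq (α i)] [∀ i, Nonempty (α i)]
    {u : ι → (∀ j, α j) → ℝ} {δ : ∀ i, α i → ℝ} {v : ι → ℝ} (hQ : FeasQ u δ v) :
    FeasP u δ v (fun i ai => if 0 < δ i ai then 1 else 0)
      (fun i ai => v i - devUtil u δ i ai) := by
  obtain ⟨hδ, hQ⟩ := hQ
  refine ⟨hδ, fun i ai => ?_⟩
  dsimp only
  obtain ⟨hs_nonneg, hcompl, hv_min, hv_max⟩ := hQ i ai
  have hs_le : v i - devUtil u δ i ai ≤ maxU u i - minU u i := by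
    linarith [minU_le_devUtil u hδ i ai]
  refine ⟨by ring, ?_, ?_, hs_nonneg, hs_le, hv_min, hv_max, ?_⟩
  · split_ifs with hpos
    · exact hδ.le_one i ai
    · exact not_lt.mp hpos
  · split_ifs with hpos
    · simp [(mul_eq_zero.mp hcompl).resolve_left hpos.ne']
    · simpa using hs_le
  · split_ifs <;> simp

end

/-- Any feasible point of (Q) extends to a feasible point of (P), using the
explicit witnesses `s i ai := v i - u_i(a_i, δ_{-i})` and
`z i ai := 1` if `δ i ai > 0`, else `0`. -/
theorem feasQ_to_feasP (u : N → (∀ j, A j) → ℝ) (δ : ∀ i, A i → ℝ) (v : N → ℝ)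
    (hQ : FeasQ u δ v) :
    (∃ z s : ∀ i, A i → ℝ, FeasP u δ v z s) ∧
    FeasP u δ v (fun i ai => if 0 < δ i ai then 1 else 0)
      (fun i ai => v i - devUtil u δ i ai) :=
  ⟨⟨_, _, hQ.feasP⟩, hQ.feasP⟩
end

section
/- If (δ, v) is feasible for the continuous formulation (Q), then for every player i, v_i = u_i(δ); that is, the value variable of each player equals that player's expected utility under δ. -/
open Finset

variable {N : Type*} [Fintype N] [DecidableEq N] [Nonempty N]
variable {A : N → Type*} [∀ i, Fintype (A i)] [∀ i, DecidableEq (A i)]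
variable [∀ i, Nonempty (A i)]

/-! Expected utility is linear in player `i`'s own mixed strategy, so
`u_i(δ) = ∑ δ_i(a_i) u_i(a_i, δ_{-i})`. Complementary slackness replaces every
`u_i(a_i, δ_{-i})` carrying positive weight by `v_i`, and the weights sum to one. -/

theorem prod_update_apply {ι : Type*} [Fintype ι] [DecidableEq ι] {α : ι → Type*} {M : Type*}
    [CommMonoid M] (f : ∀ j, α j → M) (i : ι) (g : α i → M) (a : ∀ j, α j) :
    ∏ j, Function.update f i g j (a j) = g (a i) * ∏ j ∈ univ.erase i, f j (a j) := by
  rw [← mul_prod_erase _ _ (mem_univ i), Function.update_self]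
  congr 1
  exact prod_congr rfl fun j hj => by rw [Function.update_of_ne (ne_of_mem_erase hj)]

section Linearity

variable {ι : Type*} {α : ι → Type*} [∀ i, Fintype (α i)] [∀ i, DecidableEq (α i)]

theorem sum_mul_pureStrat (i : ι) (σ : α i → ℝ) (x : α i) :
    ∑ b, σ b * pureStrat i b x = σ x := by
  simp [pureStrat]

variable [Fintype ι] [DecidableEq ι]

theorem expUtil_update_eq_sum_mul_devUtil (u : ι → (∀ j, α j) → ℝ) (δ : ∀ j, α j → ℝ)
    (i : ι) (σ : α i → ℝ) :
    expUtil u (Function.update δ i σ) i = ∑ b, σ b * devUtil u δ i b := by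
  simp only [devUtil, expUtil, prod_update_apply, mul_sum]
  rw [sum_comm]
  refine sum_congr rfl fun a _ => ?_
  calc σ (a i) * (∏ j ∈ univ.erase i, δ j (a j)) * u i a
      = (∑ b, σ b * pureStrat i b (a i)) * (∏ j ∈ univ.erase i, δ j (a j)) * u i a := by
        rw [sum_mul_pureStrat]
    _ = ∑ b, σ b * (pureStrat i b (a i) * (∏ j ∈ univ.erase i, δ j (a j)) * u i a) := by
        simp only [sum_mul, mul_assoc]

theorem sum_mul_devUtil_eq_expUtil (u : ι → (∀ j, α j) → ℝ) (δ : ∀ j, α j → ℝ) (i : ι) :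
    ∑ b, δ i b * devUtil u δ i b = expUtil u δ i := by
  simpa using (expUtil_update_eq_sum_mul_devUtil u δ i (δ i)).symm

end Linearity

/-- For any feasible point of (Q), each player's value variable equals their
expected utility. -/
theorem feasQ_value_eq_expUtil (u : N → (∀ j, A j) → ℝ) (δ : ∀ i, A i → ℝ)
    (v : N → ℝ) (hQ : FeasQ u δ v) :
    ∀ i : N, v i = expUtil u δ i := by
  obtain ⟨⟨-, hsum⟩, hslack⟩ := hQ
  intro i
  calc v i = ∑ b, δ i b * v i := by rw [← sum_mul, hsum i, one_mul]
    _ = ∑ b, δ i b * devUtil u δ i b :=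
        sum_congr rfl fun b _ => by linear_combination (hslack i b).2.1
    _ = expUtil u δ i := sum_mul_devUtil_eq_expUtil u δ i
end

section
/- If (δ, v) is feasible for the continuous formulation (Q), then δ is an exact Nash equilibrium of the game: for every player i and every mixed strategy δ'_i for player i, the expected utility of i under the profile obtained from δ by replacing δ_i with δ'_i is at most u_i(δ). -/
/-!
Under a unilateral deviation by player `i`, expected utility is linear in the deviating mixed
strategy, with coefficients `u_i(a_i, δ_{-i})`. Complementary slackness forces these coefficients
to equal `v_i` on the support of `δ_i`, so `u_i(δ) = v_i`, while any deviation averages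
coefficients that are at most `v_i`.
-/

open Finset

variable {N : Type*} [Fintype N] [DecidableEq N] [Nonempty N]
variable {A : N → Type*} [∀ i, Fintype (A i)] [∀ i, DecidableEq (A i)]
variable [∀ i, Nonempty (A i)]

section Deviation

omit [Nonempty N] [∀ i, Nonempty (A i)]

variable (u : N → (∀ j, A j) → ℝ) (δ : ∀ i, A i → ℝ) (i : N)

def oppWeightedUtil (a : ∀ j, A j) : ℝ :=
  (∏ j ∈ univ.erase i, δ j (a j)) * u i a

omit [∀ i, DecidableEq (A i)] in
lemma expUtil_update_self (δ' : A i → ℝ) :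
    expUtil u (Function.update δ i δ') i = ∑ a, δ' (a i) * oppWeightedUtil u δ i a := by
  refine sum_congr rfl fun a _ => ?_
  rw [oppWeightedUtil, ← mul_prod_erase univ _ (mem_univ i), Function.update_self, mul_assoc]
  congr 2
  exact prod_congr rfl fun j hj => by rw [Function.update_of_ne (ne_of_mem_erase hj)]

lemma devUtil_eq_sum_filter (ai : A i) :
    devUtil u δ i ai = ∑ a with a i = ai, oppWeightedUtil u δ i a := by
  simp only [devUtil, expUtil_update_self, pureStrat, ite_mul, one_mul, zero_mul, sum_ite,
    sum_const_zero, add_zero]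

lemma expUtil_update_self_eq_sum_devUtil (δ' : A i → ℝ) :
    expUtil u (Function.update δ i δ') i = ∑ ai, δ' ai * devUtil u δ i ai := by
  simp only [devUtil_eq_sum_filter, mul_sum]
  rw [expUtil_update_self, ← sum_fiberwise univ (fun a => a i)]
  exact sum_congr rfl fun ai _ => sum_congr rfl fun a ha => by rw [(mem_filter.1 ha).2]

lemma expUtil_eq_sum_devUtil : expUtil u δ i = ∑ ai, δ i ai * devUtil u δ i ai := by
  conv_lhs => rw [← Function.update_eq_self i δ]
  exact expUtil_update_self_eq_sum_devUtil u δ i (δ i)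

end Deviation

section WeightedSum

variable {ι : Type*} [Fintype ι] {w f : ι → ℝ} {c : ℝ}

lemma sum_mul_le_of_forall_le (hw : ∀ a, 0 ≤ w a) (hw₁ : ∑ a, w a = 1) (hf : ∀ a, f a ≤ c) :
    ∑ a, w a * f a ≤ c :=
  calc ∑ a, w a * f a ≤ ∑ a, w a * c :=
        sum_le_sum fun a _ => mul_le_mul_of_nonneg_left (hf a) (hw a)
    _ = c := by rw [← sum_mul, hw₁, one_mul]

lemma sum_mul_eq_of_complementary_slackness (hw₁ : ∑ a, w a = 1)
    (hslack : ∀ a, w a * (c - f a) = 0) : ∑ a, w a * f a = c :=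
  calc ∑ a, w a * f a = ∑ a, w a * c := sum_congr rfl fun a _ => by linear_combination -hslack a
    _ = c := by rw [← sum_mul, hw₁, one_mul]

end WeightedSum

/-- Any feasible point of (Q) yields an exact Nash equilibrium. -/
theorem feasQ_isNashEq (u : N → (∀ j, A j) → ℝ) (δ : ∀ i, A i → ℝ) (v : N → ℝ)
    (hQ : FeasQ u δ v) : IsNashEq u δ := by
  obtain ⟨hmix, hfeas⟩ := hQ
  refine ⟨hmix, fun i δ' hδ' hδ'₁ => ?_⟩
  have hvalue : expUtil u δ i = v i := by
    rw [expUtil_eq_sum_devUtil]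
    exact sum_mul_eq_of_complementary_slackness (hmix.2 i) fun ai => (hfeas i ai).2.1
  rw [hvalue, expUtil_update_self_eq_sum_devUtil]
  exact sum_mul_le_of_forall_le hδ' hδ'₁ fun ai => sub_nonneg.1 (hfeas i ai).1
end
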